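/- arXiv:1608.08913 — 3 statements merged into one kernel-verified Lean document; each statement's English description precedes it below -/
import Mathlib

section
/- Let h>0 and u:ℤ→ℝ be bounded. Then for every j∈ℤ, lim_{s→1⁻} (-Δ_h)^s u_j = −(u_{j+1}−2u_j+u_{j−1})/h², where (-Δ_h)^s u_j = Σ_{m∈ℤ, m≠j} (u_j−u_m)·K_s^h(j−m) (the series converges absolutely for bounded u and each 0<s<1). -/
open Filter Set

/-- The kernel of the fractional discrete Laplacian on the mesh of size `h`. -/
noncomputable def Ksh (h s : ℝ) (m : ℤ) : ℝ :=
  if m = 0 then 0 else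
    ((4 : ℝ) ^ s * Real.Gamma (1/2 + s) / (Real.sqrt Real.pi * (Real.Gamma (1 - s) / s))) *
      (Real.Gamma (|(m : ℝ)| - s) / (h ^ (2 * s) * Real.Gamma (|(m : ℝ)| + 1 + s)))

/-- The fractional discrete Laplacian `(-Δ_h)^s u_j = Σ_{m ≠ j} (u_j - u_m) K_s^h(j-m)`;
since `K_s^h(0) = 0` the sum may be taken over all of `ℤ`. -/
noncomputable def fracLap (h s : ℝ) (u : ℤ → ℝ) (j : ℤ) : ℝ :=
  ∑' m : ℤ, (u j - u m) * Ksh h s (j - m)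

/-- The constant prefactor of the kernel (including the mesh factor). -/
noncomputable def Kc (h s : ℝ) : ℝ :=
  (4 : ℝ) ^ s * Real.Gamma (1/2 + s) / (Real.sqrt Real.pi * (Real.Gamma (1 - s) / s)) /
    h ^ (2 * s)

/-- The simplified form of the kernel at `±1`. -/
noncomputable def psiA (h s : ℝ) : ℝ :=
  (4:ℝ) ^ s * Real.Gamma (1/2 + s) * s /
    (Real.sqrt Real.pi * h ^ (2 * s) * Real.Gamma (2 + s))

/-- The bound for the tail of the series. -/
noncomputable def EA (M h s : ℝ) : ℝ :=
  2 * M * Kc h s * (Real.Gamma (2 - s) / (2 * s * Real.Gamma (2 + s)))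

lemma Ksh_neg (h s : ℝ) (k : ℤ) : Ksh h s (-k) = Ksh h s k := by
  simp [Ksh, neg_eq_zero, abs_neg]

lemma Ksh_pos_eval (h s : ℝ) {k : ℤ} (hk : 0 < k) :
    Ksh h s k = Kc h s * (Real.Gamma ((k : ℝ) - s) / Real.Gamma ((k : ℝ) + 1 + s)) := by
  rw [Ksh, if_neg hk.ne', abs_of_pos (by exact_mod_cast hk : (0:ℝ) < (k : ℝ)), Kc]
  ring

/-- Telescoping estimate for sums of ratios of Gamma functions. -/
lemma gamma_ratio_summable (s c : ℝ) (hs : 0 < s) (hs1 : s < 1) (hc : 1 ≤ c) :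
    Summable (fun n : ℕ => Real.Gamma ((n : ℝ) + c - s) / Real.Gamma ((n : ℝ) + c + 1 + s)) ∧
      ∑' n : ℕ, Real.Gamma ((n : ℝ) + c - s) / Real.Gamma ((n : ℝ) + c + 1 + s)
        ≤ Real.Gamma (c - s) / (2 * s * Real.Gamma (c + s)) := by
  set b : ℕ → ℝ := fun n => Real.Gamma ((n : ℝ) + c - s) / Real.Gamma ((n : ℝ) + c + s) with hb
  have hp1 : ∀ n : ℕ, 0 < (n : ℝ) + c - s := fun n => by
    have := Nat.cast_nonneg (α := ℝ) n; linarith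
  have hp2 : ∀ n : ℕ, 0 < (n : ℝ) + c + s := fun n => by
    have := Nat.cast_nonneg (α := ℝ) n; linarith
  have hp3 : ∀ n : ℕ, 0 < (n : ℝ) + c + 1 + s := fun n => by
    have := Nat.cast_nonneg (α := ℝ) n; linarith
  have hbnn : ∀ n, 0 ≤ b n := fun n =>
    div_nonneg (Real.Gamma_pos_of_pos (hp1 n)).le (Real.Gamma_pos_of_pos (hp2 n)).le
  have hnn : ∀ n : ℕ, 0 ≤ Real.Gamma ((n : ℝ) + c - s) / Real.Gamma ((n : ℝ) + c + 1 + s) :=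
    fun n => div_nonneg (Real.Gamma_pos_of_pos (hp1 n)).le (Real.Gamma_pos_of_pos (hp3 n)).le
  have key : ∀ n : ℕ, Real.Gamma ((n : ℝ) + c - s) / Real.Gamma ((n : ℝ) + c + 1 + s)
      = (b n - b (n + 1)) / (2 * s) := by
    intro n
    have hbn1 : b (n + 1)
        = Real.Gamma (((n : ℝ) + c - s) + 1) / Real.Gamma (((n : ℝ) + c + s) + 1) := by
      simp only [hb, Nat.cast_add, Nat.cast_one]
      ring_nf
    have h1 : Real.Gamma (((n : ℝ) + c - s) + 1)
        = ((n : ℝ) + c - s) * Real.Gamma ((n : ℝ) + c - s) := Real.Gamma_add_one (hp1 n).ne'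
    have h2 : Real.Gamma (((n : ℝ) + c + s) + 1)
        = ((n : ℝ) + c + s) * Real.Gamma ((n : ℝ) + c + s) := Real.Gamma_add_one (hp2 n).ne'
    have e3 : (n : ℝ) + c + 1 + s = ((n : ℝ) + c + s) + 1 := by ring
    rw [hbn1, h1, h2, e3, h2]
    have hΓ2 : Real.Gamma ((n : ℝ) + c + s) ≠ 0 := (Real.Gamma_pos_of_pos (hp2 n)).ne'
    rw [hb]
    field_simp
    ring
  have hpart : ∀ N : ℕ, ∑ n ∈ Finset.range N,
      Real.Gamma ((n : ℝ) + c - s) / Real.Gamma ((n : ℝ) + c + 1 + s)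
      ≤ Real.Gamma (c - s) / (2 * s * Real.Gamma (c + s)) := by
    intro N
    have hsum : ∑ n ∈ Finset.range N,
        Real.Gamma ((n : ℝ) + c - s) / Real.Gamma ((n : ℝ) + c + 1 + s)
        = (b 0 - b N) / (2 * s) := by
      rw [Finset.sum_congr rfl fun n _ => key n, ← Finset.sum_div, Finset.sum_range_sub' b N]
    rw [hsum]
    have hb0 : b 0 = Real.Gamma (c - s) / Real.Gamma (c + s) := by
      simp [hb]
    have step : (b 0 - b N) / (2 * s) ≤ b 0 / (2 * s) := by
      gcongr <;> linarith [hbnn N]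
    refine step.trans (le_of_eq ?_)
    rw [hb0, div_div, mul_comm (Real.Gamma (c + s)) (2 * s)]
  exact ⟨summable_of_sum_range_le hnn hpart, Real.tsum_le_of_sum_range_le hnn hpart⟩

lemma Kc_pos {h s : ℝ} (hh : 0 < h) (hs : 0 < s) (hs1 : s < 1) : 0 < Kc h s := by
  have hπ : (0:ℝ) < Real.sqrt Real.pi := Real.sqrt_pos.mpr Real.pi_pos
  have h1 : 0 < Real.Gamma (1/2 + s) := Real.Gamma_pos_of_pos (by linarith)
  have h2 : 0 < Real.Gamma (1 - s) := Real.Gamma_pos_of_pos (by linarith)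
  have h3 : (0:ℝ) < (4:ℝ) ^ s := Real.rpow_pos_of_pos (by norm_num) _
  have h4 : (0:ℝ) < h ^ (2 * s) := Real.rpow_pos_of_pos hh _
  rw [Kc]
  exact div_pos (div_pos (mul_pos h3 h1) (mul_pos hπ (div_pos h2 hs))) h4

lemma Ksh_nonneg {h s : ℝ} (hh : 0 < h) (hs : 0 < s) (hs1 : s < 1) (k : ℤ) :
    0 ≤ Ksh h s k := by
  rcases lt_trichotomy k 0 with hk | hk | hk
  · rw [← neg_neg k, Ksh_neg]
    have hk' : 0 < -k := by omega
    rw [Ksh_pos_eval h s hk']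
    have h1 : (1:ℝ) ≤ ((-k : ℤ) : ℝ) := by exact_mod_cast hk'
    have hg1 : 0 < Real.Gamma (((-k : ℤ) : ℝ) - s) := Real.Gamma_pos_of_pos (by linarith)
    have hg2 : 0 < Real.Gamma (((-k : ℤ) : ℝ) + 1 + s) := Real.Gamma_pos_of_pos (by linarith)
    exact mul_nonneg (Kc_pos hh hs hs1).le (div_nonneg hg1.le hg2.le)
  · simp [hk, Ksh]
  · rw [Ksh_pos_eval h s hk]
    have h1 : (1:ℝ) ≤ ((k : ℤ) : ℝ) := by exact_mod_cast hk
    have hg1 : 0 < Real.Gamma ((k : ℝ) - s) := Real.Gamma_pos_of_pos (by linarith)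
    have hg2 : 0 < Real.Gamma ((k : ℝ) + 1 + s) := Real.Gamma_pos_of_pos (by linarith)
    exact mul_nonneg (Kc_pos hh hs hs1).le (div_nonneg hg1.le hg2.le)

lemma summable_Ksh (h : ℝ) (hh : 0 < h) {s : ℝ} (hs : 0 < s) (hs1 : s < 1) :
    Summable (fun k : ℤ => Ksh h s k) := by
  have hnat1 : Summable (fun n : ℕ => Ksh h s ((n : ℤ) + 1)) := by
    refine ((gamma_ratio_summable s 1 hs hs1 le_rfl).1.mul_left (Kc h s)).congr fun n => ?_
    rw [Ksh_pos_eval h s (by omega : (0:ℤ) < (n : ℤ) + 1)]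
    push_cast
    ring_nf
  have hnat : Summable (fun n : ℕ => Ksh h s (n : ℤ)) := by
    refine (summable_nat_add_iff 1).1 (hnat1.congr fun n => ?_)
    push_cast
    ring_nf
  exact hnat.of_nat_of_neg (hnat.congr fun n => (Ksh_neg h s n).symm)

lemma summand_abs_summable (h : ℝ) (hh : 0 < h) (u : ℤ → ℝ) (M : ℝ)
    (hu : ∀ j : ℤ, |u j| ≤ M) (j : ℤ) {s : ℝ} (hs : 0 < s) (hs1 : s < 1) :
    Summable fun m : ℤ => |(u j - u m) * Ksh h s (j - m)| := by
  have habs2M : ∀ m k : ℤ, |u m - u k| ≤ 2 * M := by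
    intro m k
    have h1 := hu m; have h2 := hu k
    have := abs_sub (u m) (u k)
    linarith
  have hK : Summable fun m : ℤ => Ksh h s (j - m) :=
    (summable_Ksh h hh hs hs1).comp_injective sub_right_injective
  refine Summable.of_nonneg_of_le (fun m => abs_nonneg _) (fun m => ?_) (hK.mul_left (2 * M))
  rw [abs_mul, abs_of_nonneg (Ksh_nonneg hh hs hs1 _)]
  exact mul_le_mul_of_nonneg_right (habs2M j m) (Ksh_nonneg hh hs hs1 _)

lemma Ksh_one_eq (h : ℝ) {s : ℝ} (hh : 0 < h) (hs : 0 < s) (hs1 : s < 1) :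
    Ksh h s 1 = psiA h s := by
  rw [Ksh_pos_eval h s (by norm_num : (0:ℤ) < 1), Kc]
  have hπ : (0:ℝ) < Real.sqrt Real.pi := Real.sqrt_pos.mpr Real.pi_pos
  have hΓ1s : Real.Gamma (1 - s) ≠ 0 := (Real.Gamma_pos_of_pos (by linarith)).ne'
  have hΓ2s : Real.Gamma (2 + s) ≠ 0 := (Real.Gamma_pos_of_pos (by linarith)).ne'
  have hhp : (h:ℝ) ^ (2 * s) ≠ 0 := (Real.rpow_pos_of_pos hh _).ne'
  have hs0 : s ≠ 0 := hs.ne'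
  rw [psiA]
  push_cast
  norm_num
  field_simp

lemma gammaContinuousAt (x : ℝ) (hx : 0 < x) : ContinuousAt Real.Gamma x := by
  refine (Real.differentiableAt_Gamma fun m => ?_).continuousAt
  have := Nat.cast_nonneg (α := ℝ) m
  intro hcon; rw [hcon] at hx; linarith

lemma psiA_tendsto (h : ℝ) (hh : 0 < h) :
    Filter.Tendsto (psiA h) (nhdsWithin 1 (Set.Iio 1)) (nhds (1 / h ^ 2)) := by
  have c1 : ContinuousAt (fun s : ℝ => (4:ℝ) ^ s) 1 :=
    Real.continuousAt_const_rpow (by norm_num)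
  have c2 : ContinuousAt (fun s : ℝ => Real.Gamma (1/2 + s)) 1 :=
    (gammaContinuousAt (1/2 + 1) (by norm_num)).comp
      ((continuous_const.add continuous_id).continuousAt (x := (1:ℝ)))
  have c3 : ContinuousAt (fun s : ℝ => h ^ (2 * s)) 1 :=
    (Real.continuousAt_const_rpow (a := h) (b := 2 * 1) hh.ne').comp
      ((continuous_const.mul continuous_id).continuousAt (x := (1:ℝ)))
  have c4 : ContinuousAt (fun s : ℝ => Real.Gamma (2 + s)) 1 :=
    (gammaContinuousAt (2 + 1) (by norm_num)).comp
      ((continuous_const.add continuous_id).continuousAt (x := (1:ℝ)))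
  have hden : Real.sqrt Real.pi * h ^ (2 * (1:ℝ)) * Real.Gamma (2 + 1) ≠ 0 := by
    have h5 : (0:ℝ) < h ^ (2 * (1:ℝ)) := Real.rpow_pos_of_pos hh _
    have hΓ3 : 0 < Real.Gamma (2 + 1) := Real.Gamma_pos_of_pos (by norm_num)
    have hπ : (0:ℝ) < Real.sqrt Real.pi := Real.sqrt_pos.mpr Real.pi_pos
    positivity
  have hcont : ContinuousAt (psiA h) 1 := by
    unfold psiA
    exact ((c1.mul c2).mul continuousAt_id).div
      ((continuousAt_const.mul c3).mul c4) hden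
  have hval : psiA h 1 = 1 / h ^ 2 := by
    have hΓ32 : Real.Gamma (1/2 + 1) = 1/2 * Real.sqrt Real.pi := by
      rw [Real.Gamma_add_one (by norm_num : (1/2:ℝ) ≠ 0), Real.Gamma_one_half_eq]
    have hΓ3 : Real.Gamma (2 + 1) = 2 := by
      rw [show ((2:ℝ) + 1) = ((2:ℕ) : ℝ) + 1 by norm_num, Real.Gamma_nat_eq_factorial]
      norm_num
    have hh2 : h ^ (2 * (1:ℝ)) = h ^ 2 := by
      rw [mul_one, show ((2:ℝ)) = ((2:ℕ) : ℝ) by norm_num, Real.rpow_natCast]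
    have hπ : (0:ℝ) < Real.sqrt Real.pi := Real.sqrt_pos.mpr Real.pi_pos
    rw [psiA, Real.rpow_one, hΓ32, hΓ3, hh2]
    field_simp
    ring
  rw [← hval]
  exact hcont.continuousWithinAt.tendsto

lemma eventually_Ioo : ∀ᶠ s : ℝ in nhdsWithin 1 (Set.Iio 1), s ∈ Set.Ioo (0:ℝ) 1 := by
  have h1 : ∀ᶠ s : ℝ in nhdsWithin 1 (Set.Iio 1), (0:ℝ) < s :=
    eventually_nhdsWithin_of_eventually_nhds (eventually_gt_nhds one_pos)
  have h2 : ∀ᶠ s : ℝ in nhdsWithin 1 (Set.Iio 1), s ∈ Set.Iio (1:ℝ) :=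
    eventually_mem_nhdsWithin
  filter_upwards [h1, h2] with s hs1 hs2
  exact ⟨hs1, hs2⟩

lemma EA_tendsto (M h : ℝ) (hh : 0 < h) :
    Filter.Tendsto (EA M h) (nhdsWithin 1 (Set.Iio 1)) (nhds 0) := by
  have c1 : ContinuousAt (fun s : ℝ => (4:ℝ) ^ s) 1 :=
    Real.continuousAt_const_rpow (by norm_num)
  have c2 : ContinuousAt (fun s : ℝ => Real.Gamma (1/2 + s)) 1 :=
    (gammaContinuousAt (1/2 + 1) (by norm_num)).comp
      ((continuous_const.add continuous_id).continuousAt (x := (1:ℝ)))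
  have c3 : ContinuousAt (fun s : ℝ => h ^ (2 * s)) 1 :=
    (Real.continuousAt_const_rpow (a := h) (b := 2 * 1) hh.ne').comp
      ((continuous_const.mul continuous_id).continuousAt (x := (1:ℝ)))
  have c4 : ContinuousAt (fun s : ℝ => Real.Gamma (2 + s)) 1 :=
    (gammaContinuousAt (2 + 1) (by norm_num)).comp
      ((continuous_const.add continuous_id).continuousAt (x := (1:ℝ)))
  have hden : Real.sqrt Real.pi * h ^ (2 * (1:ℝ)) * Real.Gamma (2 + 1) ≠ 0 := by
    have h5 : (0:ℝ) < h ^ (2 * (1:ℝ)) := Real.rpow_pos_of_pos hh _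
    have hΓ3 : 0 < Real.Gamma (2 + 1) := Real.Gamma_pos_of_pos (by norm_num)
    have hπ : (0:ℝ) < Real.sqrt Real.pi := Real.sqrt_pos.mpr Real.pi_pos
    positivity
  have hE'cont : ContinuousAt (fun s : ℝ => M * ((4:ℝ) ^ s * Real.Gamma (1/2 + s) * (1 - s) /
      (Real.sqrt Real.pi * h ^ (2 * s) * Real.Gamma (2 + s)))) 1 :=
    continuousAt_const.mul (((c1.mul c2).mul
      (continuous_const.sub continuous_id).continuousAt).div
      ((continuousAt_const.mul c3).mul c4) hden)
  have hE't : Filter.Tendsto (fun s : ℝ => M * ((4:ℝ) ^ s * Real.Gamma (1/2 + s) * (1 - s) /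
      (Real.sqrt Real.pi * h ^ (2 * s) * Real.Gamma (2 + s))))
      (nhdsWithin 1 (Set.Iio 1)) (nhds 0) := by
    have hE'1 : M * ((4:ℝ) ^ (1:ℝ) * Real.Gamma (1/2 + 1) * (1 - 1) /
        (Real.sqrt Real.pi * h ^ (2 * (1:ℝ)) * Real.Gamma (2 + 1))) = 0 := by
      norm_num
    rw [← hE'1]
    exact hE'cont.continuousWithinAt.tendsto
  refine hE't.congr' ?_
  filter_upwards [eventually_Ioo] with s hs
  have hΓ1s : Real.Gamma (1 - s) ≠ 0 := (Real.Gamma_pos_of_pos (by linarith [hs.2])).ne'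
  have hΓ2s : Real.Gamma (2 + s) ≠ 0 := (Real.Gamma_pos_of_pos (by linarith [hs.1])).ne'
  have hπ : (0:ℝ) < Real.sqrt Real.pi := Real.sqrt_pos.mpr Real.pi_pos
  have hhp : (h:ℝ) ^ (2 * s) ≠ 0 := (Real.rpow_pos_of_pos hh _).ne'
  have hs0 : s ≠ 0 := hs.1.ne'
  have hΓ2ms : Real.Gamma (2 - s) = (1 - s) * Real.Gamma (1 - s) := by
    rw [show (2:ℝ) - s = (1 - s) + 1 by ring,
      Real.Gamma_add_one (by intro hc; rw [sub_eq_zero] at hc; exact hs.2.ne hc.symm)]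
  rw [EA, hΓ2ms, Kc]
  field_simp

lemma tail_bound (h : ℝ) (hh : 0 < h) (u : ℤ → ℝ) (M : ℝ)
    (hu : ∀ j : ℤ, |u j| ≤ M) (j : ℤ) {s : ℝ} (hs : 0 < s) (hs1 : s < 1)
    (w : ℕ → ℤ) :
    Summable (fun n : ℕ => (u j - u (w n)) * Ksh h s ((n : ℤ) + 2)) ∧
      |∑' n : ℕ, (u j - u (w n)) * Ksh h s ((n : ℤ) + 2)| ≤ EA M h s := by
  have habs2M : ∀ m k : ℤ, |u m - u k| ≤ 2 * M := by
    intro m k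
    have h1 := hu m; have h2 := hu k
    have := abs_sub (u m) (u k)
    linarith
  have tel := gamma_ratio_summable s 2 hs hs1 (by norm_num)
  have hKeval : ∀ n : ℕ, Ksh h s ((n : ℤ) + 2)
      = Kc h s * (Real.Gamma ((n : ℝ) + 2 - s) / Real.Gamma ((n : ℝ) + 2 + 1 + s)) := by
    intro n
    rw [Ksh_pos_eval h s (by omega : (0:ℤ) < (n : ℤ) + 2)]
    push_cast
    ring_nf
  have hKcpos : 0 < Kc h s := Kc_pos hh hs hs1
  have hKnn : ∀ n : ℕ, 0 ≤ Ksh h s ((n : ℤ) + 2) := fun n => Ksh_nonneg hh hs hs1 _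
  have hptw : ∀ n : ℕ, |(u j - u (w n)) * Ksh h s ((n : ℤ) + 2)|
      ≤ 2 * M * Kc h s * (Real.Gamma ((n : ℝ) + 2 - s) / Real.Gamma ((n : ℝ) + 2 + 1 + s)) := by
    intro n
    rw [abs_mul, abs_of_nonneg (hKnn n), hKeval n, ← mul_assoc]
    have hcn := Nat.cast_nonneg (α := ℝ) n
    have hr1 : (0:ℝ) < Real.Gamma ((n : ℝ) + 2 - s) :=
      Real.Gamma_pos_of_pos (by linarith)
    have hr2 : (0:ℝ) < Real.Gamma ((n : ℝ) + 2 + 1 + s) :=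
      Real.Gamma_pos_of_pos (by linarith)
    exact mul_le_mul_of_nonneg_right
      (mul_le_mul_of_nonneg_right (habs2M j (w n)) hKcpos.le)
      (div_nonneg hr1.le hr2.le)
  have hRHSsum : Summable fun n : ℕ => 2 * M * Kc h s *
      (Real.Gamma ((n : ℝ) + 2 - s) / Real.Gamma ((n : ℝ) + 2 + 1 + s)) :=
    tel.1.mul_left _
  have habsS : Summable fun n : ℕ => |(u j - u (w n)) * Ksh h s ((n : ℤ) + 2)| :=
    Summable.of_nonneg_of_le (fun n => abs_nonneg _) hptw hRHSsum
  have hM : 0 ≤ M := le_trans (abs_nonneg _) (hu j)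
  refine ⟨summable_abs_iff.mp habsS, ?_⟩
  have hnrm : Summable fun n : ℕ => ‖(u j - u (w n)) * Ksh h s ((n : ℤ) + 2)‖ := by
    simpa only [Real.norm_eq_abs] using habsS
  have step1 : |∑' n : ℕ, (u j - u (w n)) * Ksh h s ((n : ℤ) + 2)|
      ≤ ∑' n : ℕ, |(u j - u (w n)) * Ksh h s ((n : ℤ) + 2)| := by
    simpa only [Real.norm_eq_abs] using norm_tsum_le_tsum_norm hnrm
  have step2 : (∑' n : ℕ, |(u j - u (w n)) * Ksh h s ((n : ℤ) + 2)|)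
      ≤ ∑' n : ℕ, 2 * M * Kc h s *
        (Real.Gamma ((n : ℝ) + 2 - s) / Real.Gamma ((n : ℝ) + 2 + 1 + s)) :=
    Summable.tsum_le_tsum hptw habsS hRHSsum
  have step3 : (∑' n : ℕ, 2 * M * Kc h s *
      (Real.Gamma ((n : ℝ) + 2 - s) / Real.Gamma ((n : ℝ) + 2 + 1 + s))) ≤ EA M h s := by
    rw [tsum_mul_left, EA]
    exact mul_le_mul_of_nonneg_left tel.2 (by positivity)
  exact step1.trans (step2.trans step3)

lemma fracLap_decomp (h s : ℝ) (u : ℤ → ℝ) (j : ℤ)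
    (habs : Summable fun m : ℤ => |(u j - u m) * Ksh h s (j - m)|) :
    fracLap h s u j
      = (u j - u (j - 1)) * Ksh h s 1 + (u j - u (j + 1)) * Ksh h s (-1)
        + ((∑' n : ℕ, (u j - u (j - ((n : ℤ) + 2))) * Ksh h s ((n : ℤ) + 2))
           + ∑' n : ℕ, (u j - u (j + ((n : ℤ) + 2))) * Ksh h s ((n : ℤ) + 2)) := by
  have hF : Summable fun m : ℤ => (u j - u m) * Ksh h s (j - m) := summable_abs_iff.mp habs
  have hG : Summable fun k : ℤ => (u j - u (j - k)) * Ksh h s k := by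
    refine (hF.comp_injective (sub_right_injective (b := j))).congr fun k => ?_
    show (u j - u (j - k)) * Ksh h s (j - (j - k)) = _
    rw [sub_sub_cancel]
  have e1 : fracLap h s u j = ∑' k : ℤ, (u j - u (j - k)) * Ksh h s k := by
    rw [fracLap, ← (Equiv.subLeft j).tsum_eq (fun m => (u j - u m) * Ksh h s (j - m))]
    refine tsum_congr fun k => ?_
    simp only [Equiv.subLeft_apply, sub_sub_cancel]
  have hS1 : Summable fun n : ℕ => (u j - u (j - (n : ℤ))) * Ksh h s (n : ℤ) :=
    hG.comp_injective Nat.cast_injective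
  have hS2 : Summable fun n : ℕ =>
      (u j - u (j - (-((n : ℤ) + 1)))) * Ksh h s (-((n : ℤ) + 1)) :=
    hG.comp_injective (fun a b hab => by omega)
  have e2 : (∑' k : ℤ, (u j - u (j - k)) * Ksh h s k)
      = (∑' n : ℕ, (u j - u (j - (n : ℤ))) * Ksh h s (n : ℤ))
        + ∑' n : ℕ, (u j - u (j - (-((n : ℤ) + 1)))) * Ksh h s (-((n : ℤ) + 1)) :=
    tsum_of_nat_of_neg_add_one hS1 hS2
  have hS1' : Summable fun n : ℕ =>
      (u j - u (j - ((n + 1 : ℕ) : ℤ))) * Ksh h s ((n + 1 : ℕ) : ℤ) :=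
    (summable_nat_add_iff 1).2 hS1
  have e3 : (∑' n : ℕ, (u j - u (j - (n : ℤ))) * Ksh h s (n : ℤ))
      = (u j - u (j - 1)) * Ksh h s 1
        + ∑' n : ℕ, (u j - u (j - ((n : ℤ) + 2))) * Ksh h s ((n : ℤ) + 2) := by
    rw [Summable.tsum_eq_zero_add hS1]
    have hz : (u j - u (j - ((0 : ℕ) : ℤ))) * Ksh h s ((0 : ℕ) : ℤ) = 0 := by
      norm_num [Ksh]
    rw [hz, zero_add, Summable.tsum_eq_zero_add hS1']
    have hone : (u j - u (j - ((0 + 1 : ℕ) : ℤ))) * Ksh h s ((0 + 1 : ℕ) : ℤ)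
        = (u j - u (j - 1)) * Ksh h s 1 := by norm_num
    rw [hone]
    congr 1
    all_goals
      refine tsum_congr fun n => ?_
      rw [show ((n + 1 + 1 : ℕ) : ℤ) = (n : ℤ) + 2 by push_cast; ring]
  have e4 : (∑' n : ℕ, (u j - u (j - (-((n : ℤ) + 1)))) * Ksh h s (-((n : ℤ) + 1)))
      = (u j - u (j + 1)) * Ksh h s (-1)
        + ∑' n : ℕ, (u j - u (j + ((n : ℤ) + 2))) * Ksh h s ((n : ℤ) + 2) := by
    rw [Summable.tsum_eq_zero_add hS2]
    have hone : (u j - u (j - (-(((0 : ℕ) : ℤ) + 1)))) * Ksh h s (-(((0 : ℕ) : ℤ) + 1))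
        = (u j - u (j + 1)) * Ksh h s (-1) := by norm_num [sub_neg_eq_add]
    rw [hone]
    congr 1
    all_goals
      refine tsum_congr fun n => ?_
      rw [show -(((n + 1 : ℕ) : ℤ) + 1) = -((n : ℤ) + 2) by push_cast; ring,
        sub_neg_eq_add, Ksh_neg]
  rw [e1, e2, e3, e4]
  ring

theorem fracLap_tendsto_discreteLap_of_s_to_one (h : ℝ) (hh : 0 < h) (u : ℤ → ℝ)
    (M : ℝ) (hu : ∀ j : ℤ, |u j| ≤ M) (j : ℤ) :
    (∀ s : ℝ, 0 < s → s < 1 →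
      Summable fun m : ℤ => |(u j - u m) * Ksh h s (j - m)|) ∧
    Filter.Tendsto (fun s : ℝ => fracLap h s u j)
      (nhdsWithin 1 (Set.Iio 1))
      (nhds (-(u (j + 1) - 2 * u j + u (j - 1)) / h ^ 2)) := by
  have part1 : ∀ s : ℝ, 0 < s → s < 1 →
      Summable fun m : ℤ => |(u j - u m) * Ksh h s (j - m)| :=
    fun s hs hs1 => summand_abs_summable h hh u M hu j hs hs1
  refine ⟨part1, ?_⟩
  have hK1t : Filter.Tendsto (fun s : ℝ => Ksh h s 1) (nhdsWithin 1 (Set.Iio 1))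
      (nhds (1 / h ^ 2)) := by
    refine (psiA_tendsto h hh).congr' ?_
    filter_upwards [eventually_Ioo] with s hs
    exact (Ksh_one_eq h hh hs.1 hs.2).symm
  have hKm1t : Filter.Tendsto (fun s : ℝ => Ksh h s (-1)) (nhdsWithin 1 (Set.Iio 1))
      (nhds (1 / h ^ 2)) := hK1t.congr fun s => (Ksh_neg h s 1).symm
  have hEt := EA_tendsto M h hh
  have hRp : Filter.Tendsto
      (fun s : ℝ => ∑' n : ℕ, (u j - u (j - ((n : ℤ) + 2))) * Ksh h s ((n : ℤ) + 2))
      (nhdsWithin 1 (Set.Iio 1)) (nhds 0) := by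
    refine squeeze_zero_norm' ?_ hEt
    filter_upwards [eventually_Ioo] with s hs
    rw [Real.norm_eq_abs]
    exact (tail_bound h hh u M hu j hs.1 hs.2 (fun n => j - ((n : ℤ) + 2))).2
  have hRm : Filter.Tendsto
      (fun s : ℝ => ∑' n : ℕ, (u j - u (j + ((n : ℤ) + 2))) * Ksh h s ((n : ℤ) + 2))
      (nhdsWithin 1 (Set.Iio 1)) (nhds 0) := by
    refine squeeze_zero_norm' ?_ hEt
    filter_upwards [eventually_Ioo] with s hs
    rw [Real.norm_eq_abs]
    exact (tail_bound h hh u M hu j hs.1 hs.2 (fun n => j + ((n : ℤ) + 2))).2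
  have hmain : Filter.Tendsto (fun s : ℝ =>
      (u j - u (j - 1)) * Ksh h s 1 + (u j - u (j + 1)) * Ksh h s (-1)
        + ((∑' n : ℕ, (u j - u (j - ((n : ℤ) + 2))) * Ksh h s ((n : ℤ) + 2))
           + ∑' n : ℕ, (u j - u (j + ((n : ℤ) + 2))) * Ksh h s ((n : ℤ) + 2)))
      (nhdsWithin 1 (Set.Iio 1))
      (nhds ((u j - u (j - 1)) * (1 / h ^ 2) + (u j - u (j + 1)) * (1 / h ^ 2) + (0 + 0))) :=
    ((hK1t.const_mul _).add (hKm1t.const_mul _)).add (hRp.add hRm)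
  have hval : (u j - u (j - 1)) * (1 / h ^ 2) + (u j - u (j + 1)) * (1 / h ^ 2) + (0 + 0)
      = -(u (j + 1) - 2 * u j + u (j - 1)) / h ^ 2 := by
    field_simp
    ring
  rw [hval] at hmain
  refine hmain.congr' ?_
  filter_upwards [eventually_Ioo] with s hs
  exact (fracLap_decomp h s u j (part1 s hs.1 hs.2)).symm
end

section
/- (Gamma quotient estimates.) There exist, for each admissible s, constants C_s>0 depending only on s such that for every positive integer m: (a) if 0<s<1 then |Γ(m−s)/Γ(m+1+s) − m^{−(1+2s)}| ≤ C_s·m^{−(2+2s)} and Γ(m−s)/Γ(m+1+s) ≥ (2m)^{−(1+2s)}; (b) if 0<s<1/2 then |Γ(m+s)/Γ(m+1−s) − m^{−(1−2s)}| ≤ C_s·m^{−(2−2s)} and Γ(m+s)/Γ(m+1−s) ≥ (2m)^{−(1−2s)}. -/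
open Real

lemma gautschi_upper {x t : ℝ} (hx : 0 < x) (ht0 : 0 ≤ t) (ht1 : t ≤ 1) :
    Real.Gamma (x + t) ≤ Real.Gamma x * x ^ t := by
  have hx1 : x ∈ Set.Ioi (0:ℝ) := hx
  have hx2 : x + 1 ∈ Set.Ioi (0:ℝ) := by simp only [Set.mem_Ioi]; linarith
  have h := Real.convexOn_log_Gamma.2 hx1 hx2 (by linarith : (0:ℝ) ≤ 1 - t) ht0 (by ring)
  simp only [smul_eq_mul, Function.comp_apply] at h
  have hc : (1 - t) * x + t * (x + 1) = x + t := by ring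
  rw [hc] at h
  have hΓx : 0 < Real.Gamma x := Real.Gamma_pos_of_pos hx
  have hΓxt : 0 < Real.Gamma (x + t) := Real.Gamma_pos_of_pos (by linarith)
  rw [Real.Gamma_add_one hx.ne', Real.log_mul hx.ne' hΓx.ne'] at h
  have h2 : Real.log (Real.Gamma (x + t)) ≤ Real.log (Real.Gamma x) + t * Real.log x := by
    nlinarith
  calc Real.Gamma (x + t) = Real.exp (Real.log (Real.Gamma (x + t))) := (Real.exp_log hΓxt).symm
    _ ≤ Real.exp (Real.log (Real.Gamma x) + t * Real.log x) := Real.exp_le_exp.2 h2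
    _ = Real.Gamma x * x ^ t := by
        rw [Real.exp_add, Real.exp_log hΓx, Real.rpow_def_of_pos hx, mul_comm (Real.log x)]

lemma gautschi_lower {x t : ℝ} (hx : 0 < x) (ht0 : 0 ≤ t) (ht1 : t ≤ 1) :
    Real.Gamma (x + 1) ≤ Real.Gamma (x + t) * (x + t) ^ (1 - t) := by
  have hxt : 0 < x + t := by linarith
  have h1 : x + t ∈ Set.Ioi (0:ℝ) := hxt
  have h2 : x + t + 1 ∈ Set.Ioi (0:ℝ) := by simp only [Set.mem_Ioi]; linarith
  have h := Real.convexOn_log_Gamma.2 h1 h2 ht0 (by linarith : (0:ℝ) ≤ 1 - t) (by ring)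
  simp only [smul_eq_mul, Function.comp_apply] at h
  have hc : t * (x + t) + (1 - t) * (x + t + 1) = x + 1 := by ring
  rw [hc] at h
  have hΓxt : 0 < Real.Gamma (x + t) := Real.Gamma_pos_of_pos hxt
  have hΓx1 : 0 < Real.Gamma (x + 1) := Real.Gamma_pos_of_pos (by linarith)
  rw [Real.Gamma_add_one hxt.ne', Real.log_mul hxt.ne' hΓxt.ne'] at h
  have h3 : Real.log (Real.Gamma (x + 1)) ≤
      Real.log (Real.Gamma (x + t)) + (1 - t) * Real.log (x + t) := by nlinarith
  calc Real.Gamma (x + 1) = Real.exp (Real.log (Real.Gamma (x + 1))) := (Real.exp_log hΓx1).symm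
    _ ≤ Real.exp (Real.log (Real.Gamma (x + t)) + (1 - t) * Real.log (x + t)) :=
        Real.exp_le_exp.2 h3
    _ = Real.Gamma (x + t) * (x + t) ^ (1 - t) := by
        rw [Real.exp_add, Real.exp_log hΓxt, Real.rpow_def_of_pos hxt, mul_comm (Real.log _)]

lemma epowA {y s : ℝ} (hy : 0 < y) : y ^ (-(1 + 2 * s)) = 1 / (y * (y ^ s * y ^ s)) := by
  rw [Real.rpow_neg hy.le, show (1:ℝ) + 2 * s = 1 + (s + s) by ring,
    Real.rpow_add hy, Real.rpow_add hy, Real.rpow_one, one_div]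

set_option maxHeartbeats 1000000 in
lemma partA {s x : ℝ} (hs0 : 0 < s) (hs1 : s < 1) (hx : 1 ≤ x) :
    |Real.Gamma (x - s) / Real.Gamma (x + 1 + s) - x ^ (-(1 + 2 * s))|
        ≤ (1 / (1 - s)) * x ^ (-(2 + 2 * s)) ∧
    (2 * x) ^ (-(1 + 2 * s)) ≤ Real.Gamma (x - s) / Real.Gamma (x + 1 + s) := by
  have hx0 : (0:ℝ) < x := by linarith
  have hxs : (0:ℝ) < x - s := by linarith
  have hxps : (0:ℝ) < x + s := by linarith
  have h1s : (0:ℝ) < 1 - s := by linarith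
  set A := Real.Gamma (x - s) with hA
  set B := Real.Gamma (x + s) with hB
  set G := Real.Gamma x with hG
  have hApos : 0 < A := Real.Gamma_pos_of_pos hxs
  have hBpos : 0 < B := Real.Gamma_pos_of_pos hxps
  have hGpos : 0 < G := Real.Gamma_pos_of_pos hx0
  set a := x ^ s with ha
  set b := (x - s) ^ s with hb
  set c := (x + s) ^ s with hc
  set a' := x ^ (1 - s) with ha'
  set c' := (x + s) ^ (1 - s) with hc'
  have hapos : 0 < a := rpow_pos_of_pos hx0 _
  have hbpos : 0 < b := rpow_pos_of_pos hxs _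
  have hcpos : 0 < c := rpow_pos_of_pos hxps _
  have ha'pos : 0 < a' := rpow_pos_of_pos hx0 _
  have hc'pos : 0 < c' := rpow_pos_of_pos hxps _
  have haa' : a * a' = x := by
    rw [ha, ha', ← Real.rpow_add hx0]; norm_num
  have hcc' : c * c' = x + s := by
    rw [hc, hc', ← Real.rpow_add hxps]; norm_num
  have hba : b ≤ a := Real.rpow_le_rpow hxs.le (by linarith) hs0.le
  have hac : a ≤ c := Real.rpow_le_rpow hx0.le (by linarith) hs0.le
  -- Gautschi inequalities
  have E1 : B ≤ G * a := gautschi_upper hx0 hs0.le hs1.le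
  have E2 : G ≤ A * b := by
    have := gautschi_upper hxs hs0.le hs1.le
    rwa [show x - s + s = x by ring] at this
  have E3 : x * G ≤ B * c' := by
    have := gautschi_lower hx0 hs0.le hs1.le
    rwa [Real.Gamma_add_one hx0.ne'] at this
  have E4 : (x - s) * A ≤ G * a' := by
    have := gautschi_lower hxs hs0.le hs1.le
    rwa [show x - s + s = x by ring, Real.Gamma_add_one hxs.ne'] at this
  -- denominator
  have hden : Real.Gamma (x + 1 + s) = (x + s) * B := by
    rw [show x + 1 + s = (x + s) + 1 by ring, Real.Gamma_add_one hxps.ne']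
  set Q := Real.Gamma (x - s) / Real.Gamma (x + 1 + s) with hQ
  have hQeq : Q = A / ((x + s) * B) := by rw [hQ, hden]
  -- upper bound : Q ≤ 1/((x-s) * (a*a))
  have hQU : Q ≤ 1 / ((x - s) * (a * a)) := by
    rw [hQeq, div_le_div_iff₀ (by positivity) (by positivity)]
    have k1 : x * ((x - s) * A) ≤ B * c' * a' := by
      calc x * ((x - s) * A) ≤ x * (G * a') := by
            exact mul_le_mul_of_nonneg_left E4 hx0.le
        _ = (x * G) * a' := by ring
        _ ≤ (B * c') * a' := mul_le_mul_of_nonneg_right E3 ha'pos.le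
    have k2 : (a * a') * (a * c') ≤ x * (x + s) := by
      have h2 : a * c' ≤ x + s := by
        rw [← hcc']; exact mul_le_mul_of_nonneg_right hac hc'pos.le
      calc (a * a') * (a * c') = x * (a * c') := by rw [haa']
        _ ≤ x * (x + s) := mul_le_mul_of_nonneg_left h2 hx0.le
    have k5 : (x * ((x - s) * A)) * (a * a) ≤ B * (x * (x + s)) := by
      calc (x * ((x - s) * A)) * (a * a) ≤ (B * c' * a') * (a * a) :=
            mul_le_mul_of_nonneg_right k1 (by positivity)
        _ = B * ((a * a') * (a * c')) := by ring
        _ ≤ B * (x * (x + s)) := mul_le_mul_of_nonneg_left k2 hBpos.le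
    have k6 : x * (A * ((x - s) * (a * a))) ≤ x * (1 * ((x + s) * B)) := by
      calc x * (A * ((x - s) * (a * a))) = (x * ((x - s) * A)) * (a * a) := by ring
        _ ≤ B * (x * (x + s)) := k5
        _ = x * (1 * ((x + s) * B)) := by ring
    exact le_of_mul_le_mul_left k6 hx0
  -- lower bound : 1/((x+s) * (a*a)) ≤ Q
  have hQL : 1 / ((x + s) * (a * a)) ≤ Q := by
    rw [hQeq, div_le_div_iff₀ (by positivity) (by positivity)]
    have k1 : B ≤ A * (a * a) := by
      calc B ≤ G * a := E1
        _ ≤ (A * b) * a := mul_le_mul_of_nonneg_right E2 hapos.le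
        _ ≤ (A * a) * a := by nlinarith [mul_nonneg (mul_nonneg hApos.le hapos.le) (sub_nonneg.2 hba)]
        _ = A * (a * a) := by ring
    calc 1 * ((x + s) * B) = (x + s) * B := by ring
      _ ≤ (x + s) * (A * (a * a)) := mul_le_mul_of_nonneg_left k1 hxps.le
      _ = A * ((x + s) * (a * a)) := by ring
  have hQpos : 0 < Q := lt_of_lt_of_le (by positivity) hQL
  -- rewrite the rpow targets
  have e1 : x ^ (-(1 + 2 * s)) = 1 / (x * (a * a)) := epowA hx0
  have e2 : x ^ (-(2 + 2 * s)) = 1 / (x * x * (a * a)) := by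
    rw [Real.rpow_neg hx0.le, show (2:ℝ) + 2 * s = 1 + (1 + (s + s)) by ring,
      Real.rpow_add hx0, Real.rpow_add hx0, Real.rpow_add hx0, Real.rpow_one, one_div, ha]
    ring_nf
  have hane : a ≠ 0 := hapos.ne'
  have hxne : x ≠ 0 := hx0.ne'
  have hxpsne : (x + s) ≠ 0 := hxps.ne'
  have hxsne : (x - s) ≠ 0 := hxs.ne'
  have h1sne : (1 - s) ≠ 0 := h1s.ne'
  refine ⟨?_, ?_⟩
  · rw [e1, e2, abs_le]
    have hC : (0:ℝ) < 1 / (1 - s) := by positivity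
    constructor
    · -- need : -(C/(x*x*(a*a))) ≤ Q - 1/(x*(a*a))
      have d1 : 1 / x - 1 / (x + s) = s / (x * (x + s)) := by field_simp; ring
      have d2 : s / (x * (x + s)) ≤ 1 / ((1 - s) * (x * x)) := by
        rw [div_le_div_iff₀ (by positivity) (by positivity)]
        have hss : s * (1 - s) ≤ 1 := by nlinarith
        nlinarith [mul_pos hx0 hx0, mul_nonneg hs0.le hx0.le]
      have core : 1 / x - (1 / (1 - s)) * (1 / (x * x)) ≤ 1 / (x + s) := by
        have e : (1 / (1 - s)) * (1 / (x * x)) = 1 / ((1 - s) * (x * x)) := by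
          rw [one_div_mul_one_div]
        rw [e]; linarith
      have key : 1 / (x * (a * a)) - (1 / (1 - s)) * (1 / (x * x * (a * a)))
          ≤ 1 / ((x + s) * (a * a)) := by
        have step : (1 / x - (1 / (1 - s)) * (1 / (x * x))) * (1 / (a * a))
            ≤ (1 / (x + s)) * (1 / (a * a)) := mul_le_mul_of_nonneg_right core (by positivity)
        calc 1 / (x * (a * a)) - (1 / (1 - s)) * (1 / (x * x * (a * a)))
            = (1 / x - (1 / (1 - s)) * (1 / (x * x))) * (1 / (a * a)) := by field_simp
          _ ≤ (1 / (x + s)) * (1 / (a * a)) := step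
          _ = 1 / ((x + s) * (a * a)) := by rw [one_div_mul_one_div]
      linarith
    · have d1 : 1 / (x - s) - 1 / x = s / (x * (x - s)) := by
        field_simp
        ring
      have d2 : s / (x * (x - s)) ≤ 1 / ((1 - s) * (x * x)) := by
        rw [div_le_div_iff₀ (by positivity) (by positivity)]
        nlinarith [sq_nonneg (1 - s), mul_nonneg (sub_nonneg.2 hx)
          (by nlinarith [sq_nonneg (1 - s)] : (0:ℝ) ≤ 1 - s + s * s)]
      have core : 1 / (x - s) ≤ 1 / x + (1 / (1 - s)) * (1 / (x * x)) := by
        have e : (1 / (1 - s)) * (1 / (x * x)) = 1 / ((1 - s) * (x * x)) := by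
          rw [one_div_mul_one_div]
        rw [e]; linarith
      have key : 1 / ((x - s) * (a * a))
          ≤ 1 / (x * (a * a)) + (1 / (1 - s)) * (1 / (x * x * (a * a))) := by
        have step : (1 / (x - s)) * (1 / (a * a))
            ≤ (1 / x + (1 / (1 - s)) * (1 / (x * x))) * (1 / (a * a)) :=
          mul_le_mul_of_nonneg_right core (by positivity)
        calc 1 / ((x - s) * (a * a)) = (1 / (x - s)) * (1 / (a * a)) := by
              rw [one_div_mul_one_div]
          _ ≤ (1 / x + (1 / (1 - s)) * (1 / (x * x))) * (1 / (a * a)) := step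
          _ = 1 / (x * (a * a)) + (1 / (1 - s)) * (1 / (x * x * (a * a))) := by
              field_simp
      linarith
  · -- lower bound with (2x)
    have h2x : (0:ℝ) < 2 * x := by linarith
    have e3 : (2 * x) ^ (-(1 + 2 * s)) = 1 / ((2 * x) * ((2 * x) ^ s * (2 * x) ^ s)) := epowA h2x
    have ha2 : a ≤ (2 * x) ^ s := Real.rpow_le_rpow hx0.le (by linarith) hs0.le
    have h2pos : (0:ℝ) < (2 * x) ^ s := rpow_pos_of_pos h2x _
    have hmono : (x + s) * (a * a) ≤ (2 * x) * ((2 * x) ^ s * (2 * x) ^ s) := by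
      have haa : a * a ≤ (2 * x) ^ s * (2 * x) ^ s :=
        mul_le_mul ha2 ha2 hapos.le h2pos.le
      exact mul_le_mul (by linarith) haa (by positivity) h2x.le
    have := one_div_le_one_div_of_le (by positivity) hmono
    rw [e3]
    linarith

set_option maxHeartbeats 1000000 in
lemma partB {s x : ℝ} (hs0 : 0 < s) (hs2 : s < 1/2) (hx : 1 ≤ x) :
    |Real.Gamma (x + s) / Real.Gamma (x + 1 - s) - x ^ (-(1 - 2 * s))|
        ≤ 1 * x ^ (-(2 - 2 * s)) ∧
    (2 * x) ^ (-(1 - 2 * s)) ≤ Real.Gamma (x + s) / Real.Gamma (x + 1 - s) := by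
  have hx0 : (0:ℝ) < x := by linarith
  have hxps : (0:ℝ) < x + s := by linarith
  have hx1s : (0:ℝ) < x + 1 - s := by linarith
  have ht0 : (0:ℝ) ≤ 1 - 2 * s := by linarith
  have ht1 : (1:ℝ) - 2 * s ≤ 1 := by linarith
  set B := Real.Gamma (x + s) with hB
  set Gn := Real.Gamma (x + 1 - s) with hGn
  have hBpos : 0 < B := Real.Gamma_pos_of_pos hxps
  have hGnpos : 0 < Gn := Real.Gamma_pos_of_pos hx1s
  set K := (x + s) ^ (1 - 2 * s) with hK
  set M := (x + 1 - s) ^ (2 * s) with hM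
  set N := (x + 1) ^ (2 * s) with hN
  set q := x ^ (2 * s) with hq
  have hKpos : 0 < K := rpow_pos_of_pos hxps _
  have hMpos : 0 < M := rpow_pos_of_pos hx1s _
  have hNpos : 0 < N := rpow_pos_of_pos (by linarith) _
  have hqpos : 0 < q := rpow_pos_of_pos hx0 _
  have hB1 : Gn ≤ B * K := by
    have := gautschi_upper hxps ht0 ht1
    rwa [show x + s + (1 - 2 * s) = x + 1 - s by ring] at this
  have hB2 : (x + s) * B ≤ Gn * M := by
    have := gautschi_lower hxps ht0 ht1
    rwa [show x + s + (1 - 2 * s) = x + 1 - s by ring,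
      show (1:ℝ) - (1 - 2 * s) = 2 * s by ring, Real.Gamma_add_one hxps.ne'] at this
  set Q := B / Gn with hQ
  have hQL : 1 / K ≤ Q := by
    rw [hQ, div_le_div_iff₀ hKpos hGnpos]
    linarith
  have hQU : Q ≤ M / (x + s) := by
    rw [hQ, div_le_div_iff₀ hGnpos hxps]
    linarith
  have e1 : x ^ (-(1 - 2 * s)) = q / x := by
    rw [show -(1 - 2 * s) = 2 * s - 1 by ring, Real.rpow_sub hx0, Real.rpow_one]
  have e2 : x ^ (-(2 - 2 * s)) = q / x / x := by
    rw [show -(2 - 2 * s) = 2 * s - 1 - 1 by ring, Real.rpow_sub hx0, Real.rpow_sub hx0,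
      Real.rpow_one]
  refine ⟨?_, ?_⟩
  · rw [e1, e2, abs_le, one_mul]
    constructor
    · -- lower : q/x - q/x/x ≤ Q
      have l2 : q / (x + s) ≤ 1 / K := by
        rw [div_le_div_iff₀ hxps hKpos, one_mul]
        have h1 : q ≤ (x + s) ^ (2 * s) :=
          Real.rpow_le_rpow hx0.le (by linarith) (by linarith)
        have h2 : (x + s) ^ (2 * s) * K = x + s := by
          rw [hK, ← Real.rpow_add hxps, show 2 * s + (1 - 2 * s) = (1:ℝ) by ring,
            Real.rpow_one]
        calc q * K ≤ (x + s) ^ (2 * s) * K := mul_le_mul_of_nonneg_right h1 hKpos.le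
          _ = x + s := h2
      have l3 : q * (x - 1) / (x * x) ≤ q / (x + s) := by
        rw [div_le_div_iff₀ (by positivity) hxps]
        have : (x - 1) * (x + s) ≤ x * x := by nlinarith
        nlinarith
      have l4 : q / x - q / x / x = q * (x - 1) / (x * x) := by
        field_simp
      linarith
    · -- upper : Q - q/x ≤ q/x/x
      have step1 : M ≤ N :=
        Real.rpow_le_rpow (by linarith) (by linarith) (by linarith)
      have amgm : x ^ (2 - 2 * s) * N ≤ (1 - s) * (x * x) + s * ((x + 1) * (x + 1)) := by
        have h := Real.geom_mean_le_arith_mean2_weighted (by linarith : (0:ℝ) ≤ 1 - s)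
          hs0.le (by positivity : (0:ℝ) ≤ x * x)
          (by positivity : (0:ℝ) ≤ (x + 1) * (x + 1)) (by ring)
        have id1 : (x * x) ^ (1 - s) = x ^ (2 - 2 * s) := by
          rw [Real.mul_rpow hx0.le hx0.le, ← Real.rpow_add hx0,
            show (1:ℝ) - s + (1 - s) = 2 - 2 * s by ring]
        have id2 : ((x + 1) * (x + 1)) ^ s = N := by
          rw [Real.mul_rpow (by linarith : (0:ℝ) ≤ x + 1) (by linarith : (0:ℝ) ≤ x + 1),
            ← Real.rpow_add (by linarith : (0:ℝ) < x + 1), hN,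
            show s + s = 2 * s by ring]
        rwa [id1, id2] at h
      have key1 : x ^ (2 - 2 * s) * q = x * x := by
        rw [hq, ← Real.rpow_add hx0, show 2 - 2 * s + 2 * s = (1:ℝ) + 1 by ring,
          Real.rpow_add hx0, Real.rpow_one]
      have c1 : Q ≤ N / (x + s) := hQU.trans ((div_le_div_iff_of_pos_right hxps).mpr step1)
      have c2 : N / (x + s) ≤ q * (x + 1) / (x * x) := by
        rw [div_le_div_iff₀ hxps (by positivity)]
        have r1 : (x * x) * N ≤ q * ((1 - s) * (x * x) + s * ((x + 1) * (x + 1))) := by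
          calc (x * x) * N = q * (x ^ (2 - 2 * s) * N) := by rw [← key1]; ring
            _ ≤ q * ((1 - s) * (x * x) + s * ((x + 1) * (x + 1))) :=
                mul_le_mul_of_nonneg_left amgm hqpos.le
        have r2 : (1 - s) * (x * x) + s * ((x + 1) * (x + 1)) ≤ (x + 1) * (x + s) := by
          nlinarith
        have r3 := mul_le_mul_of_nonneg_left r2 hqpos.le
        nlinarith
      have c3 : q * (x + 1) / (x * x) = q / x + q / x / x := by field_simp
      linarith
  · have h1 : (2 * x) ^ (-(1 - 2 * s)) ≤ (x + s) ^ (-(1 - 2 * s)) :=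
      Real.rpow_le_rpow_of_nonpos hxps (by linarith) (by linarith)
    have h2 : (x + s) ^ (-(1 - 2 * s)) = 1 / K := by
      rw [hK, Real.rpow_neg hxps.le, one_div]
    linarith


/-- Gamma quotient estimates: asymptotics and lower bounds for
`Γ(m-s)/Γ(m+1+s)` (for `0<s<1`) and `Γ(m+s)/Γ(m+1-s)` (for `0<s<1/2`). -/
theorem gamma_quotient_estimates (s : ℝ) :
    (0 < s → s < 1 → ∃ C : ℝ, 0 < C ∧ ∀ m : ℕ, 0 < m →
      |Real.Gamma ((m : ℝ) - s) / Real.Gamma ((m : ℝ) + 1 + s) -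
          (m : ℝ) ^ (-(1 + 2 * s))| ≤ C * (m : ℝ) ^ (-(2 + 2 * s)) ∧
      (2 * (m : ℝ)) ^ (-(1 + 2 * s)) ≤
        Real.Gamma ((m : ℝ) - s) / Real.Gamma ((m : ℝ) + 1 + s)) ∧
    (0 < s → s < 1/2 → ∃ C : ℝ, 0 < C ∧ ∀ m : ℕ, 0 < m →
      |Real.Gamma ((m : ℝ) + s) / Real.Gamma ((m : ℝ) + 1 - s) -
          (m : ℝ) ^ (-(1 - 2 * s))| ≤ C * (m : ℝ) ^ (-(2 - 2 * s)) ∧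
      (2 * (m : ℝ)) ^ (-(1 - 2 * s)) ≤
        Real.Gamma ((m : ℝ) + s) / Real.Gamma ((m : ℝ) + 1 - s)) := by
  constructor
  · intro hs0 hs1
    have h1s : (0:ℝ) < 1 - s := by linarith
    refine ⟨1 / (1 - s), by positivity, fun m hm => ?_⟩
    have hx : 1 ≤ (m : ℝ) := Nat.one_le_cast.mpr hm
    exact partA hs0 hs1 hx
  · intro hs0 hs2
    refine ⟨1, one_pos, fun m hm => ?_⟩
    have hx : 1 ≤ (m : ℝ) := Nat.one_le_cast.mpr hm
    exact partB hs0 hs2 hx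
end

section
/- (Discrete Sobolev embedding for sets.) Let 0<s<1/2. There exists a constant C_s>0 depending only on s such that for every nonempty finite set E⊂ℤ and every k∈E: Σ_{l∈ℤ∖E} 1/|k−l|^{1+2s} ≥ C_s·(#E)^{−2s}, where #E is the number of elements of E. -/
/-! Put `n = #E`. Of the `2n + 1` integers at distance at most `n` from `k`, at least `n + 1`
lie outside `E`, and each of them contributes at least `n ^ (-(1 + 2s))` to the sum. Hence the
sum is at least `n ^ (-2s)`, i.e. `C = 1` works. -/

open Finset

lemma Int.card_lt_card_Icc_sdiff (E : Finset ℤ) (k : ℤ) :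
    #E < #(Icc (k - #E) (k + #E) \ E) := by
  have h := card_le_card_sdiff_add_card (s := Icc (k - #E) (k + #E)) (t := E)
  rw [Int.card_Icc] at h
  omega

lemma sum_le_tsum_of_disjoint {α : Type*} {f : α → ℝ} (hf : Summable f) (hf0 : 0 ≤ f)
    {E F : Finset α} (hFE : Disjoint F E) :
    ∑ l ∈ F, f l ≤ ∑' l : {l // l ∉ E}, f l := by
  change _ ≤ ∑' l : ((E : Set α)ᶜ : Set α), f l
  rw [_root_.tsum_subtype]
  calc ∑ l ∈ F, f l = ∑ l ∈ F, ((E : Set α)ᶜ).indicator f l :=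
        sum_congr rfl fun l hl => (Set.indicator_of_mem (disjoint_left.mp hFE hl) f).symm
    _ ≤ ∑' l, ((E : Set α)ᶜ).indicator f l :=
        (hf.indicator _).sum_le_tsum F fun l _ => Set.indicator_nonneg (fun l _ => hf0 l) l

lemma summable_one_div_abs_sub_rpow {p : ℝ} (hp : 1 < p) (k : ℤ) :
    Summable fun l : ℤ => 1 / |(k : ℝ) - l| ^ p := by
  refine ((Equiv.subLeft k).summable_iff.mpr (Real.summable_abs_int_rpow hp)).congr fun l => ?_
  simp [Real.rpow_neg (abs_nonneg _)]

lemma card_rpow_one_sub_le_tsum {p : ℝ} (hp : 1 < p) {E : Finset ℤ} {k : ℤ} (hk : k ∈ E) :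
    (#E : ℝ) ^ (1 - p) ≤ ∑' l : {l : ℤ // l ∉ E}, 1 / |(k : ℝ) - l| ^ p := by
  set n := #E
  have hn : (0 : ℝ) < n := by exact_mod_cast card_pos.mpr ⟨k, hk⟩
  set F := Icc (k - n) (k + n) \ E
  have hterm : ∀ l ∈ F, 1 / (n : ℝ) ^ p ≤ 1 / |(k : ℝ) - l| ^ p := by
    intro l hl
    obtain ⟨hlI, hlE⟩ := mem_sdiff.mp hl
    have hkl : (k : ℝ) ≠ l := by exact_mod_cast ne_of_mem_of_not_mem hk hlE
    have hdist : |(k : ℝ) - l| ≤ n := by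
      rw [mem_Icc] at hlI
      exact_mod_cast abs_le.mpr (⟨by omega, by omega⟩ : -(n : ℤ) ≤ k - l ∧ k - l ≤ n)
    exact one_div_le_one_div_of_le (Real.rpow_pos_of_pos (abs_pos.mpr (sub_ne_zero.mpr hkl)) p)
      (Real.rpow_le_rpow (abs_nonneg _) hdist (by linarith))
  calc (n : ℝ) ^ (1 - p) = n * (1 / (n : ℝ) ^ p) := by
        rw [Real.rpow_sub hn, Real.rpow_one, mul_one_div]
    _ ≤ #F * (1 / (n : ℝ) ^ p) := by
        gcongr
        exact_mod_cast (Int.card_lt_card_Icc_sdiff E k).le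
    _ ≤ ∑ l ∈ F, 1 / |(k : ℝ) - l| ^ p := by
        simpa using card_nsmul_le_sum F _ _ hterm
    _ ≤ ∑' l : {l : ℤ // l ∉ E}, 1 / |(k : ℝ) - l| ^ p :=
        sum_le_tsum_of_disjoint (summable_one_div_abs_sub_rpow hp k)
          (fun l => by positivity) sdiff_disjoint

theorem discrete_Sobolev_embedding_for_sets_general (s : ℝ) (hs0 : 0 < s) :
    ∃ C : ℝ, 0 < C ∧ ∀ E : Finset ℤ, E.Nonempty → ∀ k ∈ E,
      C * (E.card : ℝ) ^ (-(2 * s)) ≤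
        ∑' l : {l : ℤ // l ∉ E}, 1 / |(k : ℝ) - ((l : ℤ) : ℝ)| ^ (1 + 2 * s) := by
  refine ⟨1, one_pos, fun E _ k hk => ?_⟩
  have h := card_rpow_one_sub_le_tsum (p := 1 + 2 * s) (by linarith) hk
  rwa [one_mul, show -(2 * s) = 1 - (1 + 2 * s) by ring]

/-- Discrete Sobolev embedding for sets: for any nonempty finite `E ⊂ ℤ` and any `k ∈ E`,
`Σ_{l ∉ E} 1/|k-l|^{1+2s} ≥ C_s (#E)^{-2s}`. -/
theorem discrete_Sobolev_embedding_for_sets (s : ℝ) (hs0 : 0 < s) (hs1 : s < 1/2) :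
    ∃ C : ℝ, 0 < C ∧ ∀ E : Finset ℤ, E.Nonempty → ∀ k ∈ E,
      C * (E.card : ℝ) ^ (-(2 * s)) ≤
        ∑' l : {l : ℤ // l ∉ E}, 1 / |(k : ℝ) - ((l : ℤ) : ℝ)| ^ (1 + 2 * s) :=
  discrete_Sobolev_embedding_for_sets_general s hs0
end
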